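/- arXiv:2304.13917 — 9 statements merged into one kernel-verified Lean document; each statement's English description precedes it below -/
import Mathlib

section
/- For every unconstrained clustering instance — a metric space (X,d), a finite multiset N of n ≥ 1 agents (points of X), and an integer k with 1 ≤ k ≤ n — there exists a multiset W of k points of X, each of which coincides with the location of some agent in N, such that W satisfies Proportionally Representative Fairness (PRF). -/
open scoped Classical

/-- Proportionally Representative Fairness (PRF) for unconstrained clustering:
for every submultiset `S` of the agent multiset `N` and every positive `ℓ` with
`k·|S| ≥ ℓ·|N|`, letting `y` be the diameter of `S` (the greatest pairwise
distance among agents in `S`), at least `ℓ` centers of `W` (with multiplicity)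
are within distance `y` of some agent of `S`. -/
def PRF {X : Type*} [MetricSpace X] (N : Multiset X) (k : ℕ) (W : Multiset X) : Prop :=
  ∀ S : Multiset X, S ≤ N → ∀ ℓ : ℕ, 0 < ℓ → ℓ * Multiset.card N ≤ k * Multiset.card S →
    ∀ y : ℝ, IsGreatest {r : ℝ | ∃ i ∈ S, ∃ i' ∈ S, dist i i' = r} y →
      ℓ ≤ Multiset.card (W.filter (fun c => ∃ i ∈ S, dist i c ≤ y))

/-- Extract a submultiset of a prescribed cardinality. -/
lemma multiset_exists_le_card {X : Type*} (s : Multiset X) (q : ℕ)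
    (h : q ≤ Multiset.card s) : ∃ P : Multiset X, P ≤ s ∧ Multiset.card P = q := by
  refine ⟨(s.toList.take q : List X), ?_, ?_⟩
  · calc ((s.toList.take q : List X) : Multiset X) ≤ (s.toList : Multiset X) :=
        Multiset.coe_le.mpr (List.Sublist.subperm (List.take_sublist _ _))
    _ = s := Multiset.coe_toList s
  · have : s.toList.length = Multiset.card s := by
      rw [← Multiset.coe_card, Multiset.coe_toList]
    simp [List.length_take, this, h]

/-- The key greedy-capture induction: if `R` has exactly `j * q` agents remaining, we can
pick `j` centers among them such that every "cohesive" submultiset `T` of `R` of size at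
least `m * q` gets at least `m` centers within its diameter bound `y`. -/
lemma greedy_exists {X : Type*} [MetricSpace X] (M : Multiset X) (q : ℕ) (hq : 1 ≤ q) :
    ∀ j : ℕ, ∀ R : Multiset X, R ≤ M → Multiset.card R = j * q →
    ∃ W : Multiset X, Multiset.card W = j ∧ (∀ c ∈ W, c ∈ M) ∧
      ∀ (T : Multiset X) (y : ℝ), T ≤ R → (∀ i ∈ T, ∀ i' ∈ T, dist i i' ≤ y) →
        ∀ m : ℕ, m * q ≤ Multiset.card T →
          m ≤ Multiset.card (W.filter (fun c => ∃ i ∈ T, dist i c ≤ y)) := by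
  intro j
  induction j with
  | zero =>
      intro R _ hcard
      refine ⟨0, by simp, by simp, ?_⟩
      intro T y hT _ m hm
      have hT0 : Multiset.card T = 0 := by
        have := Multiset.card_le_card hT
        omega
      have : m = 0 := by
        rw [hT0] at hm; nlinarith
      simp [this]
  | succ j ih =>
      intro R hRM hcard
      have hR0 : q ≤ Multiset.card R := by rw [hcard]; nlinarith
      obtain ⟨a0, ha0⟩ := Multiset.card_pos_iff_exists_mem.mp (lt_of_lt_of_le hq hR0)
      -- candidate pairs: center i, witness x, ball of radius `dist i x` captures ≥ q agents
      set F := (R.toFinset ×ˢ R.toFinset).filter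
        (fun p => q ≤ Multiset.card (R.filter (fun z => dist z p.1 ≤ dist p.1 p.2))) with hF
      have hmemF : ∀ i x : X, i ∈ R → x ∈ R →
          q ≤ Multiset.card (R.filter (fun z => dist z i ≤ dist i x)) → (i, x) ∈ F := by
        intro i x hi hx hcond
        simp only [hF, Finset.mem_filter, Finset.mem_product, Multiset.mem_toFinset]
        exact ⟨⟨hi, hx⟩, hcond⟩
      have hFne : F.Nonempty := by
        obtain ⟨x, hx, hmax⟩ := R.toFinset.exists_max_image (fun z => dist a0 z)
          ⟨a0, Multiset.mem_toFinset.mpr ha0⟩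
        refine ⟨(a0, x), hmemF a0 x ha0 (Multiset.mem_toFinset.mp hx) ?_⟩
        have hfe : R.filter (fun z => dist z a0 ≤ dist a0 x) = R := by
          rw [Multiset.filter_eq_self]
          intro z hz
          rw [dist_comm]
          exact hmax z (Multiset.mem_toFinset.mpr hz)
        rw [hfe]; exact hR0
      obtain ⟨⟨c, x0⟩, hcF, hmin⟩ := F.exists_min_image (fun p => dist p.1 p.2) hFne
      simp only [hF, Finset.mem_filter, Finset.mem_product, Multiset.mem_toFinset] at hcF
      obtain ⟨⟨hcR, _⟩, hcq⟩ := hcF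
      obtain ⟨P, hPle, hPcard⟩ := multiset_exists_le_card _ q hcq
      have hPR : P ≤ R := le_trans hPle (Multiset.filter_le _ _)
      have hPdist : ∀ z ∈ P, dist z c ≤ dist c x0 := fun z hz =>
        (Multiset.mem_filter.mp (Multiset.mem_of_le hPle hz)).2
      have hR'M : (R - P) ≤ M := le_trans (tsub_le_self) hRM
      have hR'card : Multiset.card (R - P) = j * q := by
        rw [Multiset.card_sub hPR, hcard, hPcard]
        ring_nf
        omega
      obtain ⟨W', hW'card, hW'mem, hW'prop⟩ := ih (R - P) hR'M hR'card
      refine ⟨c ::ₘ W', by simp [hW'card], ?_, ?_⟩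
      · intro d hd
        rcases Multiset.mem_cons.mp hd with h | h
        · exact Multiset.mem_of_le hRM (h ▸ hcR)
        · exact hW'mem d h
      · intro T y hTR hdiam m hm
        rcases Nat.eq_zero_or_pos m with rfl | hm1
        · simp
        have hTq : q ≤ Multiset.card T := le_trans (by nlinarith) hm
        obtain ⟨i0, hi0⟩ := Multiset.card_pos_iff_exists_mem.mp (lt_of_lt_of_le hq hTq)
        obtain ⟨xs, hxs, hxsmax⟩ := T.toFinset.exists_max_image (fun z => dist i0 z)
          ⟨i0, Multiset.mem_toFinset.mpr hi0⟩
        have hxsT : xs ∈ T := Multiset.mem_toFinset.mp hxs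
        have hcand : (i0, xs) ∈ F := by
          refine hmemF i0 xs (Multiset.mem_of_le hTR hi0) (Multiset.mem_of_le hTR hxsT) ?_
          refine le_trans hTq (Multiset.card_le_card (Multiset.le_filter.mpr ⟨hTR, ?_⟩))
          intro z hz
          rw [dist_comm]
          exact hxsmax z (Multiset.mem_toFinset.mpr hz)
        have hry : dist c x0 ≤ y := le_trans (hmin _ hcand) (hdiam i0 hi0 xs hxsT)
        by_cases hgood : ∃ i ∈ T, dist i c ≤ y
        · -- center `c` is within `y` of `T`: recurse on `T - P` with quota `m - 1`
          have hT'le : T - P ≤ R - P := tsub_le_tsub_right hTR P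
          have hT'card : (m - 1) * q ≤ Multiset.card (T - P) := by
            have h1 : Multiset.card T ≤ Multiset.card (T - P) + q := by
              have h2 : T ≤ T - P + P := le_tsub_add
              have := Multiset.card_le_card h2
              rw [Multiset.card_add, hPcard] at this
              exact this
            have h3 : m * q = (m - 1) * q + q := by
              cases m with
              | zero => omega
              | succ m' => simp [Nat.succ_sub_one, Nat.succ_mul]
            omega
          have hIH := hW'prop (T - P) y hT'le
            (fun i hi i' hi' => hdiam i (Multiset.mem_of_le tsub_le_self hi)
              i' (Multiset.mem_of_le tsub_le_self hi')) (m - 1) hT'card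
          have hmono : Multiset.filter (fun c => ∃ i ∈ T - P, dist i c ≤ y) W' ≤
              Multiset.filter (fun c => ∃ i ∈ T, dist i c ≤ y) W' :=
            Multiset.monotone_filter_right _ (fun b hb => by
              obtain ⟨i, hi, hd⟩ := hb
              exact ⟨i, Multiset.mem_of_le tsub_le_self hi, hd⟩)
          rw [Multiset.filter_cons_of_pos (p := fun c => ∃ i ∈ T, dist i c ≤ y) W' hgood, Multiset.card_cons]
          have := le_trans hIH (Multiset.card_le_card hmono)
          omega
        · -- center `c` is far from `T`: its captured ball `P` is disjoint from `T`
          have hTR' : T ≤ R - P := by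
            rw [Multiset.le_iff_count]
            intro a
            rw [Multiset.count_sub]
            by_cases haT : a ∈ T
            · have haP : a ∉ P := fun haP =>
                hgood ⟨a, haT, le_trans (hPdist a haP) hry⟩
              rw [Multiset.count_eq_zero_of_notMem haP, Nat.sub_zero]
              exact Multiset.le_iff_count.mp hTR a
            · simp [Multiset.count_eq_zero_of_notMem haT]
          have hIH := hW'prop T y hTR' hdiam m hm
          refine le_trans hIH (Multiset.card_le_card ?_)
          calc Multiset.filter (fun c => ∃ i ∈ T, dist i c ≤ y) W' ≤
              Multiset.filter (fun c => ∃ i ∈ T, dist i c ≤ y) (c ::ₘ W') :=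
            Multiset.filter_le_filter _ (Multiset.le_cons_self _ _)

/-- For every unconstrained clustering instance there exists a multiset `W` of `k`
centers, each coinciding with the location of some agent, satisfying PRF. -/
theorem prf_outcome_exists {X : Type*} [MetricSpace X] (N : Multiset X) (n k : ℕ)
    (hn : n = Multiset.card N) (hn1 : 1 ≤ n) (hk1 : 1 ≤ k) (hkn : k ≤ n) :
    ∃ W : Multiset X, Multiset.card W = k ∧ (∀ c ∈ W, c ∈ N) ∧ PRF N k W := by
  classical
  have hk0 : k ≠ 0 := by omega
  have hq : 1 ≤ Multiset.card N := hn ▸ hn1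
  obtain ⟨W, hWcard, hWmem, hWprop⟩ := greedy_exists (M := k • N) (q := Multiset.card N) hq
    k (k • N) le_rfl (by simp [Multiset.card_nsmul])
  refine ⟨W, hWcard, ?_, ?_⟩
  · intro c hc
    exact (Multiset.mem_nsmul.mp (hWmem c hc)).2
  · intro S hS ℓ hℓ hineq y hy
    have hTle : k • S ≤ k • N := by
      rw [Multiset.le_iff_count]
      intro a
      simp only [Multiset.count_nsmul]
      exact Nat.mul_le_mul_left k (Multiset.le_iff_count.mp hS a)
    have hdiam : ∀ i ∈ k • S, ∀ i' ∈ k • S, dist i i' ≤ y := by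
      intro i hi i' hi'
      exact hy.2 ⟨i, (Multiset.mem_nsmul.mp hi).2, i', (Multiset.mem_nsmul.mp hi').2, rfl⟩
    have hm : ℓ * Multiset.card N ≤ Multiset.card (k • S) := by
      rw [Multiset.card_nsmul]
      exact hineq
    have := hWprop (k • S) y hTle hdiam ℓ hm
    refine le_trans this (Multiset.card_le_card (Multiset.monotone_filter_right _ ?_))
    intro b hb
    obtain ⟨i, hi, hd⟩ := hb
    exact ⟨i, (Multiset.mem_nsmul.mp hi).2, hd⟩
end

section
/- For every discrete clustering instance — a metric space (X,d), a finite multiset N of n ≥ 1 agents (points of X), a finite set M ⊆ X of candidate centers, and an integer k with 1 ≤ k ≤ n and k ≤ |M| — there exists a subset W ⊆ M with |W| = k such that W satisfies discrete Proportionally Representative Fairness (discrete PRF). -/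
open scoped Classical

/-- Proportionally Representative Fairness (PRF) for discrete clustering:
for every submultiset `S` of the agent multiset `N`, every positive `ℓ` with
`k·|S| ≥ ℓ·|N|`, every real `y ≥ 0`, and every positive `ℓ' ≤ ℓ`: if at least `ℓ'`
candidates of `M` are within distance `y` of *all* agents of `S`, then at least `ℓ'`
selected centers of `W` are within distance `y` of *some* agent of `S`. -/
def PRFdiscrete {X : Type*} [MetricSpace X] (N : Multiset X) (M : Finset X) (k : ℕ)
    (W : Finset X) : Prop :=
  ∀ S : Multiset X, S ≤ N → ∀ ℓ : ℕ, 0 < ℓ → ℓ * Multiset.card N ≤ k * Multiset.card S →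
    ∀ y : ℝ, 0 ≤ y → ∀ ℓ' : ℕ, 0 < ℓ' → ℓ' ≤ ℓ →
      ℓ' ≤ (M.filter (fun c => ∀ i ∈ S, dist i c ≤ y)).card →
      ℓ' ≤ (W.filter (fun c => ∃ i ∈ S, dist i c ≤ y)).card

lemma card_filter_le_filter_of_imp {α : Type*} (s : Multiset α) (p q : α → Prop)
    (h : ∀ t ∈ s, p t → q t) :
    Multiset.card (s.filter p) ≤ Multiset.card (s.filter q) := by
  induction s using Multiset.induction_on with
  | empty => simp
  | cons a s ih =>
    have ih' := ih (fun t ht hp => h t (Multiset.mem_cons_of_mem ht) hp)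
    by_cases hp : p a
    · have hq : q a := h a (Multiset.mem_cons_self a s) hp
      rw [Multiset.filter_cons_of_pos _ hp, Multiset.filter_cons_of_pos _ hq]
      simpa using ih'
    · rw [Multiset.filter_cons_of_neg _ hp]
      by_cases hq : q a
      · rw [Multiset.filter_cons_of_pos _ hq]; simp; omega
      · rw [Multiset.filter_cons_of_neg _ hq]; exact ih'

lemma exists_le_card_multiset {α : Type*} (s : Multiset α) (n : ℕ) (h : n ≤ Multiset.card s) :
    ∃ D : Multiset α, D ≤ s ∧ Multiset.card D = n := by
  obtain ⟨l, rfl⟩ : ∃ l : List α, (l : Multiset α) = s := ⟨s.toList, Multiset.coe_toList s⟩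
  refine ⟨(l.take n : List α), Multiset.coe_le.mpr (l.take_sublist n).subperm, ?_⟩
  simp only [Multiset.coe_card, List.length_take]
  simp only [Multiset.coe_card] at h
  omega

/-- the n-th smallest distance radius -/
lemma exists_radius {X : Type*} [MetricSpace X] (R : Multiset X) (n : ℕ) (hn1 : 1 ≤ n)
    (hR : n ≤ Multiset.card R) (c : X) :
    ∃ rc : ℝ, n ≤ Multiset.card (R.filter (fun t => dist t c ≤ rc)) ∧
      ∀ y : ℝ, n ≤ Multiset.card (R.filter (fun t => dist t c ≤ y)) → rc ≤ y := by
  have hR0 : R ≠ 0 := by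
    intro h0; rw [h0] at hR; simp at hR; omega
  have hBne : (R.toFinset.image (fun t => dist t c)).Nonempty := by
    obtain ⟨t, ht⟩ := Multiset.exists_mem_of_ne_zero hR0
    exact ⟨dist t c, Finset.mem_image.mpr ⟨t, Multiset.mem_toFinset.mpr ht, rfl⟩⟩
  set B := R.toFinset.image (fun t => dist t c) with hB
  set A := B.filter (fun z => n ≤ Multiset.card (R.filter (fun t => dist t c ≤ z))) with hA
  have hAne : A.Nonempty := by
    refine ⟨B.max' hBne, Finset.mem_filter.mpr ⟨B.max'_mem hBne, ?_⟩⟩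
    have : R.filter (fun t => dist t c ≤ B.max' hBne) = R := by
      rw [Multiset.filter_eq_self]
      intro t ht
      exact B.le_max' _ (Finset.mem_image.mpr ⟨t, Multiset.mem_toFinset.mpr ht, rfl⟩)
    rw [this]; exact hR
  refine ⟨A.min' hAne, (Finset.mem_filter.mp (A.min'_mem hAne)).2, ?_⟩
  intro y hy
  have hFne : (R.filter (fun t => dist t c ≤ y)) ≠ 0 := by
    intro h0; rw [h0] at hy; simp at hy; omega
  set F := R.filter (fun t => dist t c ≤ y) with hF
  have hB'ne : (F.toFinset.image (fun t => dist t c)).Nonempty := by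
    obtain ⟨t, ht⟩ := Multiset.exists_mem_of_ne_zero hFne
    exact ⟨dist t c, Finset.mem_image.mpr ⟨t, Multiset.mem_toFinset.mpr ht, rfl⟩⟩
  set B' := F.toFinset.image (fun t => dist t c) with hB'
  set ys := B'.max' hB'ne with hys
  have hysy : ys ≤ y := by
    apply Finset.max'_le
    intro z hz
    obtain ⟨t, ht, rfl⟩ := Finset.mem_image.mp hz
    have := Multiset.mem_toFinset.mp ht
    exact (Multiset.mem_filter.mp this).2
  have hysA : ys ∈ A := by
    refine Finset.mem_filter.mpr ⟨?_, ?_⟩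
    · obtain ⟨t, ht, hteq⟩ := Finset.mem_image.mp (B'.max'_mem hB'ne)
      have htR : t ∈ R := (Multiset.mem_filter.mp (Multiset.mem_toFinset.mp ht)).1
      exact Finset.mem_image.mpr ⟨t, Multiset.mem_toFinset.mpr htR, hteq⟩
    · calc n ≤ Multiset.card F := hy
        _ ≤ Multiset.card (R.filter (fun t => dist t c ≤ ys)) := by
            apply card_filter_le_filter_of_imp
            intro t htR htd
            exact B'.le_max' _ (Finset.mem_image.mpr ⟨t,
              Multiset.mem_toFinset.mpr (Multiset.mem_filter.mpr ⟨htR, htd⟩), rfl⟩)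
  exact le_trans (A.min'_le _ hysA) hysy

lemma prf_main_induction {X : Type*} [MetricSpace X] (M : Finset X) (n k : ℕ)
    (hn1 : 1 ≤ n) (hkM : k ≤ M.card) :
    ∀ m : ℕ, ∀ W : Finset X, ∀ R : Multiset X, W ⊆ M → W.card + m = k →
      Multiset.card R = m * n →
      ∃ W' : Finset X, W ⊆ W' ∧ W' ⊆ M ∧ W'.card = k ∧
        ∀ y : ℝ, ∀ T : Multiset X, T ≤ R → ∀ cs : X, cs ∈ M → cs ∉ W' →
          (∀ t ∈ T, dist t cs ≤ y) →
          Multiset.card T ≤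
            ((W' \ W).filter (fun c => ∃ t ∈ T, dist t c ≤ y)).card * n + (n - 1) := by
  intro m
  induction m with
  | zero =>
    intro W R hWM hcard hRcard
    refine ⟨W, Finset.Subset.refl W, hWM, by omega, ?_⟩
    intro y T hT cs hcsM hcsW hTd
    have : R = 0 := by
      rw [← Multiset.card_eq_zero]; omega
    have hT0 : T = 0 := le_antisymm (this ▸ hT) (Multiset.zero_le T)
    simp [hT0]
  | succ m ih =>
    intro W R hWM hcard hRcard
    have hnR : n ≤ Multiset.card R := by
      rw [hRcard]; nlinarith
    -- radius function
    have hrad := fun c : X => exists_radius R n hn1 hnR c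
    choose r hr1 hr2 using hrad
    -- choose minimizing candidate in M \ W
    have hMWne : (M \ W).Nonempty := by
      rw [← Finset.card_pos, Finset.card_sdiff_of_subset hWM]
      omega
    obtain ⟨cm, hcmMW, hcmmin⟩ := Finset.exists_min_image (M \ W) r hMWne
    have hcmM : cm ∈ M := (Finset.mem_sdiff.mp hcmMW).1
    have hcmW : cm ∉ W := (Finset.mem_sdiff.mp hcmMW).2
    -- choose D
    obtain ⟨D, hDle, hDcard⟩ := exists_le_card_multiset
      (R.filter (fun t => dist t cm ≤ r cm)) n (hr1 cm)
    have hDR : D ≤ R := le_trans hDle (Multiset.filter_le _ R)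
    have hDdist : ∀ t ∈ D, dist t cm ≤ r cm := by
      intro t ht
      exact (Multiset.mem_filter.mp (Multiset.mem_of_le hDle ht)).2
    -- recurse
    have hW2M : insert cm W ⊆ M := Finset.insert_subset hcmM hWM
    have hW2card : (insert cm W).card + m = k := by
      rw [Finset.card_insert_of_notMem hcmW]; omega
    have hRDcard : Multiset.card (R - D) = m * n := by
      rw [Multiset.card_sub hDR]; rw [hRcard, hDcard]; ring_nf; omega
    obtain ⟨W', hW2W', hW'M, hW'card, hclaim⟩ := ih (insert cm W) (R - D) hW2M hW2card hRDcard
    have hWW' : W ⊆ W' := le_trans (Finset.subset_insert cm W) hW2W'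
    have hcmW' : cm ∈ W' := hW2W' (Finset.mem_insert_self cm W)
    refine ⟨W', hWW', hW'M, hW'card, ?_⟩
    intro y T hT cs hcsM hcsW' hTd
    by_cases hy : y < r cm
    · -- case A: radius too small, fewer than n tokens near cs
      have hcsW : cs ∉ W := fun h => hcsW' (hWW' h)
      have hrcs : r cm ≤ r cs := hcmmin cs (Finset.mem_sdiff.mpr ⟨hcsM, hcsW⟩)
      have hlt : Multiset.card (R.filter (fun t => dist t cs ≤ y)) < n := by
        by_contra hge
        push_neg at hge
        have := hr2 cs y hge
        linarith
      have hTcard : Multiset.card T ≤ Multiset.card (R.filter (fun t => dist t cs ≤ y)) := by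
        have hTfilter : T.filter (fun t => dist t cs ≤ y) = T :=
          Multiset.filter_eq_self.mpr hTd
        calc Multiset.card T = Multiset.card (T.filter (fun t => dist t cs ≤ y)) := by
              rw [hTfilter]
          _ ≤ Multiset.card (R.filter (fun t => dist t cs ≤ y)) :=
              Multiset.card_le_card (Multiset.filter_le_filter _ hT)
      omega
    · -- case B: r cm ≤ y
      push_neg at hy
      set T' := T - D with hT'
      have hT'le : T' ≤ R - D := tsub_le_tsub_right hT D
      have hT'T : T' ≤ T := tsub_le_self
      have hT'd : ∀ t ∈ T', dist t cs ≤ y := fun t ht => hTd t (Multiset.mem_of_le hT'T ht)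
      have hcsW2 : cs ∉ insert cm W := fun h => hcsW' (hW2W' h)
      have hIH := hclaim y T' hT'le cs hcsM hcsW' hT'd
      have hTsplit : Multiset.card T = Multiset.card T' + Multiset.card (T ∩ D) := by
        conv_lhs => rw [← Multiset.sub_add_inter T D]
        rw [Multiset.card_add]
      set f' := ((W' \ insert cm W).filter (fun c => ∃ t ∈ T', dist t c ≤ y)).card with hf'
      set f := ((W' \ W).filter (fun c => ∃ t ∈ T, dist t c ≤ y)).card with hf
      by_cases hTD : T ∩ D = 0
      · -- no S-tokens removed at this step
        have hsub : (W' \ insert cm W).filter (fun c => ∃ t ∈ T', dist t c ≤ y) ⊆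
            (W' \ W).filter (fun c => ∃ t ∈ T, dist t c ≤ y) := by
          intro c hc
          obtain ⟨hc1, hc2⟩ := Finset.mem_filter.mp hc
          obtain ⟨hc1a, hc1b⟩ := Finset.mem_sdiff.mp hc1
          refine Finset.mem_filter.mpr ⟨Finset.mem_sdiff.mpr ⟨hc1a,
            fun h => hc1b (Finset.mem_insert_of_mem h)⟩, ?_⟩
          obtain ⟨t, ht, htd⟩ := hc2
          exact ⟨t, Multiset.mem_of_le hT'T ht, htd⟩
        have hff' : f' ≤ f := Finset.card_le_card hsub
        rw [hTsplit, hTD]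
        simp only [Multiset.card_zero, add_zero]
        calc Multiset.card T' ≤ f' * n + (n - 1) := hIH
          _ ≤ f * n + (n - 1) := by
              have := Nat.mul_le_mul_right n hff'; omega
      · -- cm is within y of some token of T
        obtain ⟨t0, ht0⟩ := Multiset.exists_mem_of_ne_zero hTD
        have ht0T : t0 ∈ T := Multiset.mem_of_le (Multiset.inter_le_left : T ∩ D ≤ T) ht0
        have ht0D : t0 ∈ D := Multiset.mem_of_le (Multiset.inter_le_right : T ∩ D ≤ D) ht0
        have hcmgood : cm ∈ (W' \ W).filter (fun c => ∃ t ∈ T, dist t c ≤ y) :=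
          Finset.mem_filter.mpr ⟨Finset.mem_sdiff.mpr ⟨hcmW', hcmW⟩,
            ⟨t0, ht0T, le_trans (hDdist t0 ht0D) hy⟩⟩
        have hsub : insert cm ((W' \ insert cm W).filter (fun c => ∃ t ∈ T', dist t c ≤ y)) ⊆
            (W' \ W).filter (fun c => ∃ t ∈ T, dist t c ≤ y) := by
          intro c hc
          rcases Finset.mem_insert.mp hc with rfl | hc
          · exact hcmgood
          · obtain ⟨hc1, hc2⟩ := Finset.mem_filter.mp hc
            obtain ⟨hc1a, hc1b⟩ := Finset.mem_sdiff.mp hc1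
            refine Finset.mem_filter.mpr ⟨Finset.mem_sdiff.mpr ⟨hc1a,
              fun h => hc1b (Finset.mem_insert_of_mem h)⟩, ?_⟩
            obtain ⟨t, ht, htd⟩ := hc2
            exact ⟨t, Multiset.mem_of_le hT'T ht, htd⟩
        have hcmnotin : cm ∉ (W' \ insert cm W).filter (fun c => ∃ t ∈ T', dist t c ≤ y) := by
          intro h
          exact (Finset.mem_sdiff.mp (Finset.mem_filter.mp h).1).2 (Finset.mem_insert_self cm W)
        have hf'1 : f' + 1 ≤ f := by
          have := Finset.card_le_card hsub
          rw [Finset.card_insert_of_notMem hcmnotin] at this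
          omega
        have hTDcard : Multiset.card (T ∩ D) ≤ n := by
          calc Multiset.card (T ∩ D) ≤ Multiset.card D :=
              Multiset.card_le_card (Multiset.inter_le_right : T ∩ D ≤ D)
            _ = n := hDcard
        calc Multiset.card T = Multiset.card T' + Multiset.card (T ∩ D) := hTsplit
          _ ≤ (f' * n + (n - 1)) + n := by omega
          _ ≤ (f' + 1) * n + (n - 1) := by ring_nf; omega
          _ ≤ f * n + (n - 1) := by
              have := Nat.mul_le_mul_right n hf'1; omega

/-- For every discrete clustering instance there exists a subset `W ⊆ M` of `k`
centers satisfying discrete PRF. -/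
theorem prf_discrete_outcome_exists {X : Type*} [MetricSpace X] (N : Multiset X)
    (M : Finset X) (n k : ℕ) (hn : n = Multiset.card N) (hn1 : 1 ≤ n)
    (hk1 : 1 ≤ k) (hkn : k ≤ n) (hkM : k ≤ M.card) :
    ∃ W : Finset X, W ⊆ M ∧ W.card = k ∧ PRFdiscrete N M k W := by
  have hRcard : Multiset.card (k • N) = k * n := by
    rw [hn]; simp
  obtain ⟨W, hWsub, hWsub2, hWcard, hclaim⟩ :=
    prf_main_induction M n k hn1 hkM k (∅ : Finset X) (k • N)
      (Finset.empty_subset M) (by simp) hRcard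
  refine ⟨W, hWsub2, hWcard, ?_⟩
  intro S hS ℓ hℓ hℓn y hy ℓ' hℓ'0 hℓ'ℓ hcand
  by_contra hcon
  push_neg at hcon
  -- S is nonempty
  have hScard : 1 ≤ Multiset.card S := by
    by_contra h
    push_neg at h
    have hc : Multiset.card S = 0 := by omega
    rw [hc, Nat.mul_zero, ← hn] at hℓn
    nlinarith
  obtain ⟨i0, hi0⟩ := Multiset.exists_mem_of_ne_zero
    (by intro h0; rw [h0] at hScard; simp at hScard : S ≠ 0)
  -- there's an unselected witness candidate
  have hwitness : ∃ cs ∈ M.filter (fun c => ∀ i ∈ S, dist i c ≤ y), cs ∉ W := by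
    by_contra hall
    push_neg at hall
    have hsub : M.filter (fun c => ∀ i ∈ S, dist i c ≤ y) ⊆
        W.filter (fun c => ∃ i ∈ S, dist i c ≤ y) := by
      intro c hc
      obtain ⟨hcM, hcd⟩ := Finset.mem_filter.mp hc
      exact Finset.mem_filter.mpr ⟨hall c hc, ⟨i0, hi0, hcd i0 hi0⟩⟩
    have := Finset.card_le_card hsub
    omega
  obtain ⟨cs, hcsmem, hcsW⟩ := hwitness
  obtain ⟨hcsM, hcsall⟩ := Finset.mem_filter.mp hcsmem
  -- apply the claim with T = k • S
  have hTle : (k • S : Multiset X) ≤ k • N := by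
    rw [Multiset.le_iff_count]
    intro a
    simp only [Multiset.count_nsmul]
    exact Nat.mul_le_mul_left k (Multiset.le_iff_count.mp hS a)
  have hmemT : ∀ t, t ∈ (k • S : Multiset X) ↔ t ∈ S := by
    intro t
    rw [Multiset.mem_nsmul]
    exact ⟨fun h => h.2, fun h => ⟨by omega, h⟩⟩
  have hTd : ∀ t ∈ (k • S : Multiset X), dist t cs ≤ y := by
    intro t ht
    exact hcsall t ((hmemT t).mp ht)
  have hmain := hclaim y (k • S) hTle cs hcsM hcsW hTd
  have hfiltereq : (W \ ∅).filter (fun c => ∃ t ∈ (k • S : Multiset X), dist t c ≤ y) =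
      W.filter (fun c => ∃ i ∈ S, dist i c ≤ y) := by
    rw [Finset.sdiff_empty]
    apply Finset.filter_congr
    intro c _
    constructor
    · rintro ⟨t, ht, htd⟩; exact ⟨t, (hmemT t).mp ht, htd⟩
    · rintro ⟨t, ht, htd⟩; exact ⟨t, (hmemT t).mpr ht, htd⟩
  rw [hfiltereq] at hmain
  have hTcard : Multiset.card (k • S : Multiset X) = k * Multiset.card S := by simp
  set f := (W.filter (fun c => ∃ i ∈ S, dist i c ≤ y)).card with hfdef
  -- ℓ' * n ≤ card T ≤ f * n + (n-1) with f ≤ ℓ' - 1 : contradiction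
  have h1 : ℓ' * n ≤ k * Multiset.card S := by
    calc ℓ' * n ≤ ℓ * n := Nat.mul_le_mul_right n hℓ'ℓ
      _ = ℓ * Multiset.card N := by rw [hn]
      _ ≤ k * Multiset.card S := hℓn
  have h2 : f + 1 ≤ ℓ' := by omega
  have h3 : (f + 1) * n ≤ ℓ' * n := Nat.mul_le_mul_right n h2
  rw [hTcard] at hmain
  have h4 : (f + 1) * n = f * n + n := by ring
  have h5 : f * n + (n - 1) < f * n + n := Nat.add_lt_add_left (by omega) _
  have : ℓ' * n < ℓ' * n := by
    calc ℓ' * n ≤ k * Multiset.card S := h1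
      _ ≤ f * n + (n - 1) := hmain
      _ < f * n + n := h5
      _ = (f + 1) * n := h4.symm
      _ ≤ ℓ' * n := h3
  exact absurd this (lt_irrefl _)
end

section
/- In the unconstrained setting, PRF implies Unanimous Proportionality: if a multiset W of k points of X satisfies Proportionally Representative Fairness (PRF) for an instance with agent multiset N of size n and parameter k, then for every point x ∈ X and every positive integer ℓ such that at least ℓ·⌈n/k⌉ agents of N are located at x, the multiset W contains at least ℓ centers located at x (counted with multiplicity). -/
open scoped Classical

/-- PRF implies Unanimous Proportionality: if at least `ℓ·⌈n/k⌉` agents are located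
at a point `x`, then at least `ℓ` of the selected centers are located at `x`. -/
theorem prf_implies_unanimous_proportionality {X : Type*} [MetricSpace X]
    (N W : Multiset X) (n k : ℕ) (hn : n = Multiset.card N) (hn1 : 1 ≤ n)
    (hk1 : 1 ≤ k) (hkn : k ≤ n) (hW : Multiset.card W = k) (hPRF : PRF N k W) :
    ∀ x : X, ∀ ℓ : ℕ, 0 < ℓ → ℓ * ⌈(n : ℚ) / (k : ℚ)⌉₊ ≤ N.count x →
      ℓ ≤ W.count x := by
  intro x ℓ hℓ hcount
  set m := ℓ * ⌈(n : ℚ) / (k : ℚ)⌉₊ with hm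
  have hk0 : (0 : ℚ) < k := by exact_mod_cast hk1
  have hceil : 1 ≤ ⌈(n : ℚ) / (k : ℚ)⌉₊ := by
    apply Nat.one_le_ceil_iff.mpr
    apply div_pos
    · exact_mod_cast hn1
    · exact hk0
  have hm0 : 0 < m := Nat.mul_pos hℓ hceil
  have hS : Multiset.replicate m x ≤ N := Multiset.le_count_iff_replicate_le.mp hcount
  have hnkc : n ≤ k * ⌈(n : ℚ) / (k : ℚ)⌉₊ := by
    have h1 : (n : ℚ) / k ≤ (⌈(n : ℚ) / (k : ℚ)⌉₊ : ℚ) := Nat.le_ceil _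
    have h2 : (n : ℚ) ≤ (k : ℚ) * (⌈(n : ℚ) / (k : ℚ)⌉₊ : ℚ) := by
      rw [div_le_iff₀ hk0] at h1; linarith
    exact_mod_cast h2
  have hkey : ℓ * Multiset.card N ≤ k * Multiset.card (Multiset.replicate m x) := by
    rw [Multiset.card_replicate, ← hn, hm]
    calc ℓ * n ≤ ℓ * (k * ⌈(n : ℚ) / (k : ℚ)⌉₊) := Nat.mul_le_mul_left ℓ hnkc
      _ = k * (ℓ * ⌈(n : ℚ) / (k : ℚ)⌉₊) := by ring
  have hxmem : x ∈ Multiset.replicate m x := Multiset.mem_replicate.mpr ⟨hm0.ne', rfl⟩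
  have hgreat : IsGreatest {r : ℝ | ∃ i ∈ Multiset.replicate m x, ∃ i' ∈ Multiset.replicate m x,
      dist i i' = r} 0 := by
    constructor
    · exact ⟨x, hxmem, x, hxmem, dist_self x⟩
    · rintro r ⟨i, hi, i', hi', rfl⟩
      rw [(Multiset.mem_replicate.mp hi).2, (Multiset.mem_replicate.mp hi').2, dist_self]
  have h := hPRF (Multiset.replicate m x) hS ℓ hℓ hkey 0 hgreat
  refine le_trans h (le_of_eq ?_)
  have hfeq : W.filter (fun c => ∃ i ∈ Multiset.replicate m x, dist i c ≤ 0) =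
      W.filter (fun c => x = c) := by
    apply Multiset.filter_congr
    intro c _
    constructor
    · rintro ⟨i, hi, hd⟩
      rw [(Multiset.mem_replicate.mp hi).2] at hd
      exact (dist_le_zero.mp hd).symm ▸ rfl
    · rintro rfl
      exact ⟨x, hxmem, le_of_eq (dist_self x)⟩
  rw [hfeq, Multiset.count_eq_card_filter_eq]
end

section
/- Proportional fairness does not imply Unanimous Proportionality: for the instance on the real line (with the usual metric) consisting of the agent multiset N with 10000 agents at the point 0 and 1000 agents at the point 1 (so n = 11000), k = 11, and candidate space the interval [0,1], the outcome W consisting of one center at 0 and ten centers at 1 satisfies proportional fairness but violates Unanimous Proportionality (which would require at least 10 centers at 0). -/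
open scoped Classical

/-- Distance from an agent `i` to its nearest center in the multiset `W`. -/
noncomputable def distToOutcome (W : Multiset ℝ) (i : ℝ) : ℝ :=
  sInf {r : ℝ | ∃ c ∈ W, dist i c = r}

/-- Proportional fairness (PF): for every submultiset `S` of `N` with
`|S| ≥ ⌈n/k⌉` and every candidate `c ∈ M`, some agent `i ∈ S` has
`d(i,c) ≥ d(i,W)`. -/
def PF (N : Multiset ℝ) (M : Set ℝ) (k : ℕ) (W : Multiset ℝ) : Prop :=
  ∀ S : Multiset ℝ, S ≤ N → ⌈(Multiset.card N : ℚ) / (k : ℚ)⌉₊ ≤ Multiset.card S →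
    ∀ c ∈ M, ∃ i ∈ S, distToOutcome W i ≤ dist i c

/-- Unanimous Proportionality (UP): whenever at least `ℓ·⌈n/k⌉` agents of `N` are
located at `x`, the outcome contains at least `ℓ` centers at `x` (with multiplicity). -/
def UP (N : Multiset ℝ) (k : ℕ) (W : Multiset ℝ) : Prop :=
  ∀ x : ℝ, ∀ ℓ : ℕ, 0 < ℓ → ℓ * ⌈(Multiset.card N : ℚ) / (k : ℚ)⌉₊ ≤ N.count x →
    ℓ ≤ W.count x

lemma distToOutcome_le_of_mem (W : Multiset ℝ) (i : ℝ) (hi : i ∈ W) :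
    distToOutcome W i ≤ 0 := by
  apply csInf_le
  · exact ⟨0, fun r ⟨c, _, hc⟩ => hc ▸ dist_nonneg⟩
  · exact ⟨i, hi, dist_self i⟩

/-- Proportional fairness does not imply Unanimous Proportionality: with 10000
agents at 0 and 1000 agents at 1, `k = 11`, candidate space `[0,1]`, the outcome
with one center at 0 and ten centers at 1 is PF but not UP. -/
theorem pf_not_imply_up :
    PF (Multiset.replicate 10000 (0 : ℝ) + Multiset.replicate 1000 (1 : ℝ))
       (Set.Icc (0 : ℝ) 1) 11
       (Multiset.replicate 1 (0 : ℝ) + Multiset.replicate 10 (1 : ℝ)) ∧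
    ¬ UP (Multiset.replicate 10000 (0 : ℝ) + Multiset.replicate 1000 (1 : ℝ)) 11
         (Multiset.replicate 1 (0 : ℝ) + Multiset.replicate 10 (1 : ℝ)) := by
  have hceil : ⌈(Multiset.card (Multiset.replicate 10000 (0 : ℝ) +
      Multiset.replicate 1000 (1 : ℝ)) : ℚ) / (11 : ℚ)⌉₊ = 1000 := by
    simp only [Multiset.card_add, Multiset.card_replicate]
    norm_num
  constructor
  · intro S hS hcard c hc
    have hpos : 0 < Multiset.card S := by
      have h1000 : ⌈((10000 + 1000 : ℕ) : ℚ) / ((11:ℕ) : ℚ)⌉₊ = 1000 := by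
        norm_num
      simp only [Multiset.card_add, Multiset.card_replicate, h1000] at hcard
      omega
    obtain ⟨i, hiS⟩ := Multiset.card_pos_iff_exists_mem.mp hpos
    refine ⟨i, hiS, ?_⟩
    have hiN := Multiset.mem_of_le hS hiS
    have hiW : i ∈ Multiset.replicate 1 (0 : ℝ) + Multiset.replicate 10 (1 : ℝ) := by
      rw [Multiset.mem_add] at hiN ⊢
      rcases hiN with h | h
      · have hi0 : i = 0 := Multiset.eq_of_mem_replicate h
        subst hi0
        exact Or.inl (Multiset.mem_replicate.mpr ⟨by norm_num, rfl⟩)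
      · have hi1 : i = 1 := Multiset.eq_of_mem_replicate h
        subst hi1
        exact Or.inr (Multiset.mem_replicate.mpr ⟨by norm_num, rfl⟩)
    exact le_trans (distToOutcome_le_of_mem _ _ hiW) dist_nonneg
  · intro h
    have := h 0 10 (by norm_num) (by
      simp only [Multiset.card_add, Multiset.card_replicate, Multiset.count_add,
        Multiset.count_replicate]
      norm_num)
    simp [Multiset.count_replicate] at this
end

section
/- Core fairness does not imply Unanimous Proportionality: for the instance on the real line (with the usual metric) consisting of the agent multiset N with 10000 agents at the point 0 and 1000 agents at the point 1 (so n = 11000), k = 11, and candidate space the interval [0,1], the outcome W consisting of one center at 0 and ten centers at 1 satisfies core fairness but violates Unanimous Proportionality (which would require at least 10 centers at 0). -/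
open scoped Classical

/-- Core fairness: for every submultiset `S` of `N` with `|S| ≥ ⌈n/k⌉` and every
candidate `c ∈ M`, `Σ_{i∈S} d(i,c) ≥ Σ_{i∈S} d(i,W)`. -/
def CoreFair (N : Multiset ℝ) (M : Set ℝ) (k : ℕ) (W : Multiset ℝ) : Prop :=
  ∀ S : Multiset ℝ, S ≤ N → ⌈(Multiset.card N : ℚ) / (k : ℚ)⌉₊ ≤ Multiset.card S →
    ∀ c ∈ M, (S.map (fun i => distToOutcome W i)).sum ≤ (S.map (fun i => dist i c)).sum

lemma distToOutcome_eq_zero {W : Multiset ℝ} {i : ℝ} (hi : i ∈ W) :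
    distToOutcome W i = 0 := by
  have hmem : (0 : ℝ) ∈ {r : ℝ | ∃ c ∈ W, dist i c = r} := ⟨i, hi, dist_self i⟩
  have hbdd : ∀ r ∈ {r : ℝ | ∃ c ∈ W, dist i c = r}, (0:ℝ) ≤ r := by
    rintro r ⟨c, _, rfl⟩; exact dist_nonneg
  have h1 : distToOutcome W i ≤ 0 := csInf_le ⟨0, hbdd⟩ hmem
  have h2 : 0 ≤ distToOutcome W i := le_csInf ⟨0, hmem⟩ hbdd
  linarith

/-- Core fairness does not imply Unanimous Proportionality: with 10000 agents at 0
and 1000 agents at 1, `k = 11`, candidate space `[0,1]`, the outcome with one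
center at 0 and ten centers at 1 is core fair but not UP. -/
theorem core_not_imply_up :
    CoreFair (Multiset.replicate 10000 (0 : ℝ) + Multiset.replicate 1000 (1 : ℝ))
       (Set.Icc (0 : ℝ) 1) 11
       (Multiset.replicate 1 (0 : ℝ) + Multiset.replicate 10 (1 : ℝ)) ∧
    ¬ UP (Multiset.replicate 10000 (0 : ℝ) + Multiset.replicate 1000 (1 : ℝ)) 11
         (Multiset.replicate 1 (0 : ℝ) + Multiset.replicate 10 (1 : ℝ)) := by
  constructor
  · intro S hS _ c _
    have hL : (S.map (fun i => distToOutcome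
        (Multiset.replicate 1 (0 : ℝ) + Multiset.replicate 10 (1 : ℝ)) i)).sum = 0 := by
      apply Multiset.sum_eq_zero
      intro r hr
      rw [Multiset.mem_map] at hr
      obtain ⟨i, hiS, rfl⟩ := hr
      have hiN := Multiset.mem_of_le hS hiS
      rw [Multiset.mem_add, Multiset.mem_replicate, Multiset.mem_replicate] at hiN
      norm_num at hiN
      rcases hiN with rfl | rfl
      · exact distToOutcome_eq_zero (by
          rw [Multiset.mem_add]; left; rw [Multiset.mem_replicate]; norm_num)
      · exact distToOutcome_eq_zero (by
          rw [Multiset.mem_add]; right; rw [Multiset.mem_replicate]; norm_num)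
    rw [hL]
    apply Multiset.sum_nonneg
    intro r hr
    rw [Multiset.mem_map] at hr
    obtain ⟨i, _, rfl⟩ := hr
    exact dist_nonneg
  · intro h
    have h10 := h 0 10 (by norm_num) (by
      rw [Multiset.card_add, Multiset.card_replicate, Multiset.card_replicate,
        Multiset.count_add, Multiset.count_replicate, Multiset.count_replicate]
      norm_num)
    rw [Multiset.count_add, Multiset.count_replicate, Multiset.count_replicate] at h10
    norm_num at h10
end

section
/- An outcome satisfying PRF-II may not exist: for the instance on the real line (with the usual metric) with agent multiset N = {0, 0, 1, 1} (so n = 4), k = 2, and candidate multiset M = {0, 0.5, 0.5, 1}, no submultiset W of M with |W| = 2 satisfies PRF-II. -/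
open scoped Classical

/-- PRF-II for discrete clustering with a candidate multiset `M`: for every
submultiset `S` of `N`, positive `ℓ` with `k·|S| ≥ ℓ·|N|`, real `y ≥ 0` and
positive `ℓ' ≤ ℓ`, if at least `ℓ'` candidates of `M` (with multiplicity) are
within distance `y` of all agents of `S`, then some agent `i ∈ S` has at least
`ℓ'` selected centers (with multiplicity) within distance `y` of `i`. -/
def PRFII {X : Type*} [MetricSpace X] (N M : Multiset X) (k : ℕ) (W : Multiset X) : Prop :=
  ∀ S : Multiset X, S ≤ N → ∀ ℓ : ℕ, 0 < ℓ → ℓ * Multiset.card N ≤ k * Multiset.card S →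
    ∀ y : ℝ, 0 ≤ y → ∀ ℓ' : ℕ, 0 < ℓ' → ℓ' ≤ ℓ →
      ℓ' ≤ Multiset.card (M.filter (fun c => ∀ i ∈ S, dist i c ≤ y)) →
      ∃ i ∈ S, ℓ' ≤ Multiset.card (W.filter (fun c => dist i c ≤ y))

/-- A PRF-II outcome may not exist: for agents `{0,0,1,1}`, `k = 2` and candidate
multiset `{0, 0.5, 0.5, 1}`, no submultiset `W` of `M` of size 2 satisfies PRF-II. -/
theorem prfII_may_not_exist :
    ∀ W : Multiset ℝ, W ≤ ({0, 0.5, 0.5, 1} : Multiset ℝ) → Multiset.card W = 2 →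
      ¬ PRFII ({0, 0, 1, 1} : Multiset ℝ) ({0, 0.5, 0.5, 1} : Multiset ℝ) 2 W := by
  intro W hW hcard hP
  -- 0 ∈ W
  have h0 : (0:ℝ) ∈ W := by
    have hS : ({0,0} : Multiset ℝ) ≤ ({0,0,1,1} : Multiset ℝ) := by
      have h : ({0,0,1,1} : Multiset ℝ) = ({0,0} : Multiset ℝ) + ({1,1} : Multiset ℝ) := rfl
      rw [h]; exact Multiset.le_add_right _ _
    have hp : ∀ i ∈ ({0,0}:Multiset ℝ), dist i (0:ℝ) ≤ (0:ℝ) := by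
      intro i hi
      simp only [Multiset.insert_eq_cons, Multiset.mem_cons, Multiset.mem_singleton] at hi
      rcases hi with h | h <;> subst h <;> simp
    obtain ⟨i, hi, hle⟩ := hP {0,0} hS 1 one_pos (by simp) 0 le_rfl 1 one_pos le_rfl (by
      refine le_trans (le_of_eq ?_) (Multiset.count_le_card (0:ℝ) _)
      rw [Multiset.count_filter_of_pos hp]
      norm_num [Multiset.insert_eq_cons, Multiset.count_cons, Multiset.count_singleton])
    have hi0 : i = 0 := by simpa using hi
    subst hi0
    have hne : (W.filter (fun c => dist (0:ℝ) c ≤ 0)) ≠ 0 := by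
      intro h; rw [h] at hle; simp at hle
    obtain ⟨c, hc⟩ := Multiset.exists_mem_of_ne_zero hne
    rw [Multiset.mem_filter] at hc
    have hc0 : (0:ℝ) = c := dist_eq_zero.mp (le_antisymm hc.2 dist_nonneg)
    rw [hc0]; exact hc.1
  -- 1 ∈ W
  have h1 : (1:ℝ) ∈ W := by
    have hS : ({1,1} : Multiset ℝ) ≤ ({0,0,1,1} : Multiset ℝ) := by
      have h : ({0,0,1,1} : Multiset ℝ) = ({0,0} : Multiset ℝ) + ({1,1} : Multiset ℝ) := rfl
      rw [h]; exact Multiset.le_add_left _ _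
    have hp : ∀ i ∈ ({1,1}:Multiset ℝ), dist i (1:ℝ) ≤ (0:ℝ) := by
      intro i hi
      simp only [Multiset.insert_eq_cons, Multiset.mem_cons, Multiset.mem_singleton] at hi
      rcases hi with h | h <;> subst h <;> simp
    obtain ⟨i, hi, hle⟩ := hP {1,1} hS 1 one_pos (by simp) 0 le_rfl 1 one_pos le_rfl (by
      refine le_trans (le_of_eq ?_) (Multiset.count_le_card (1:ℝ) _)
      rw [Multiset.count_filter_of_pos hp]
      norm_num [Multiset.insert_eq_cons, Multiset.count_cons, Multiset.count_singleton])
    have hi1 : i = 1 := by simpa using hi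
    subst hi1
    have hne : (W.filter (fun c => dist (1:ℝ) c ≤ 0)) ≠ 0 := by
      intro h; rw [h] at hle; simp at hle
    obtain ⟨c, hc⟩ := Multiset.exists_mem_of_ne_zero hne
    rw [Multiset.mem_filter] at hc
    have hc1 : (1:ℝ) = c := dist_eq_zero.mp (le_antisymm hc.2 dist_nonneg)
    rw [hc1]; exact hc.1
  -- apply PRF-II with S = N, y = 0.5, ℓ = ℓ' = 2
  have hp : ∀ i ∈ ({0,0,1,1}:Multiset ℝ), dist i (0.5:ℝ) ≤ (0.5:ℝ) := by
    intro i hi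
    simp only [Multiset.insert_eq_cons, Multiset.mem_cons, Multiset.mem_singleton] at hi
    rcases hi with h | h | h | h <;> subst h <;>
      rw [Real.dist_eq, abs_le] <;> norm_num
  obtain ⟨i, hi, hle⟩ := hP {0,0,1,1} le_rfl 2 two_pos (by simp) 0.5 (by norm_num) 2 two_pos
    le_rfl (by
      refine le_trans (le_of_eq ?_) (Multiset.count_le_card (0.5:ℝ) _)
      rw [Multiset.count_filter_of_pos hp]
      norm_num [Multiset.insert_eq_cons, Multiset.count_cons, Multiset.count_singleton])
  -- derive contradiction: the filtered set equals W, but contains a far point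
  have hcardle : Multiset.card (W.filter (fun c => dist i c ≤ 0.5)) ≤ Multiset.card W :=
    Multiset.card_le_card (Multiset.filter_le _ _)
  have heq : W.filter (fun c => dist i c ≤ 0.5) = W := by
    apply Multiset.eq_of_le_of_card_le (Multiset.filter_le _ _)
    omega
  have hi01 : i = 0 ∨ i = 1 := by
    simp only [Multiset.insert_eq_cons, Multiset.mem_cons, Multiset.mem_singleton] at hi
    tauto
  rcases hi01 with h | h <;> subst h
  · have : (1:ℝ) ∈ W.filter (fun c => dist (0:ℝ) c ≤ 0.5) := heq.symm ▸ h1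
    have := (Multiset.mem_filter.mp this).2
    rw [Real.dist_eq] at this
    norm_num at this
  · have : (0:ℝ) ∈ W.filter (fun c => dist (1:ℝ) c ≤ 0.5) := heq.symm ▸ h0
    have := (Multiset.mem_filter.mp this).2
    rw [Real.dist_eq] at this
    norm_num at this
end

section
/- An outcome satisfying PRF-III may not exist: for the instance on the real line (with the usual metric) with agent multiset N = {0, 0, 1, 1} (so n = 4), k = 2, and candidate multiset M = {0, 0.5, 0.5, 1}, no submultiset W of M with |W| = 2 satisfies PRF-III. -/
open scoped Classical

/-- PRF-III for discrete clustering with a candidate multiset `M`: for every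
submultiset `S` of `N`, positive `ℓ` with `k·|S| ≥ ℓ·|N|`, real `y ≥ 0` and
positive `ℓ' ≤ ℓ`, if at least `ℓ'` candidates of `M` (with multiplicity) are
within distance `y` of all agents of `S`, then at least `ℓ'` selected centers
(with multiplicity) are within distance `y` of all agents of `S`. -/
def PRFIII {X : Type*} [MetricSpace X] (N M : Multiset X) (k : ℕ) (W : Multiset X) : Prop :=
  ∀ S : Multiset X, S ≤ N → ∀ ℓ : ℕ, 0 < ℓ → ℓ * Multiset.card N ≤ k * Multiset.card S →
    ∀ y : ℝ, 0 ≤ y → ∀ ℓ' : ℕ, 0 < ℓ' → ℓ' ≤ ℓ →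
      ℓ' ≤ Multiset.card (M.filter (fun c => ∀ i ∈ S, dist i c ≤ y)) →
      ℓ' ≤ Multiset.card (W.filter (fun c => ∀ i ∈ S, dist i c ≤ y))

/-- A PRF-III outcome may not exist: for agents `{0,0,1,1}`, `k = 2` and candidate
multiset `{0, 0.5, 0.5, 1}`, no submultiset `W` of `M` of size 2 satisfies PRF-III. -/
theorem prfIII_may_not_exist :
    ∀ W : Multiset ℝ, W ≤ ({0, 0.5, 0.5, 1} : Multiset ℝ) → Multiset.card W = 2 →
      ¬ PRFIII ({0, 0, 1, 1} : Multiset ℝ) ({0, 0.5, 0.5, 1} : Multiset ℝ) 2 W := by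
  intro W _hW hcard h
  have hsub0 : ({0, 0} : Multiset ℝ) ≤ ({0, 0, 1, 1} : Multiset ℝ) := by
    have : ({0, 0, 1, 1} : Multiset ℝ) = ({0, 0} : Multiset ℝ) + ({1, 1} : Multiset ℝ) := rfl
    rw [this]; exact Multiset.le_add_right _ _
  have hsub1 : ({1, 1} : Multiset ℝ) ≤ ({0, 0, 1, 1} : Multiset ℝ) := by
    have : ({0, 0, 1, 1} : Multiset ℝ) = ({0, 0} : Multiset ℝ) + ({1, 1} : Multiset ℝ) := rfl
    rw [this]; exact Multiset.le_add_left _ _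
  -- Step 1: 0 ∈ W
  have hmain0 := h ({0, 0} : Multiset ℝ) hsub0 1 one_pos (by simp) 0 le_rfl 1 one_pos le_rfl
    (by
      refine Multiset.card_pos_iff_exists_mem.2 ⟨(0 : ℝ), Multiset.mem_filter.2 ⟨by simp, ?_⟩⟩
      intro i hi
      simp only [Multiset.insert_eq_cons, Multiset.mem_cons, Multiset.mem_singleton] at hi
      rcases hi with h' | h' <;> subst h' <;> simp)
  have h0 : (0 : ℝ) ∈ W := by
    obtain ⟨c, hc⟩ := Multiset.card_pos_iff_exists_mem.1 (lt_of_lt_of_le one_pos hmain0)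
    obtain ⟨hcW, hcP⟩ := Multiset.mem_filter.1 hc
    have hc0 : c = 0 := by simpa [Real.dist_eq] using hcP 0 (by simp)
    rwa [← hc0]
  -- Step 2: 1 ∈ W
  have hmain1 := h ({1, 1} : Multiset ℝ) hsub1 1 one_pos (by simp) 0 le_rfl 1 one_pos le_rfl
    (by
      refine Multiset.card_pos_iff_exists_mem.2 ⟨(1 : ℝ), Multiset.mem_filter.2 ⟨by simp, ?_⟩⟩
      intro i hi
      simp only [Multiset.insert_eq_cons, Multiset.mem_cons, Multiset.mem_singleton] at hi
      rcases hi with h' | h' <;> subst h' <;> simp)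
  have h1 : (1 : ℝ) ∈ W := by
    obtain ⟨c, hc⟩ := Multiset.card_pos_iff_exists_mem.1 (lt_of_lt_of_le one_pos hmain1)
    obtain ⟨hcW, hcP⟩ := Multiset.mem_filter.1 hc
    have h' : |1 - c| ≤ 0 := by simpa [Real.dist_eq] using hcP 1 (by simp)
    have hc1 : c = 1 := by have := abs_nonpos_iff.1 h'; linarith
    rwa [← hc1]
  -- Step 3: W = {0, 1}
  obtain ⟨W', rfl⟩ := Multiset.exists_cons_of_mem h0
  have h1' : (1 : ℝ) ∈ W' := by
    rcases Multiset.mem_cons.1 h1 with h' | h'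
    · norm_num at h'
    · exact h'
  obtain ⟨W'', rfl⟩ := Multiset.exists_cons_of_mem h1'
  have hW'' : W'' = 0 := by
    simp only [Multiset.card_cons] at hcard
    exact Multiset.card_eq_zero.1 (by omega)
  subst hW''
  -- Step 4: contradiction with S = N, ℓ = ℓ' = 2, y = 0.5
  have hp5 : ∀ i ∈ ({0, 0, 1, 1} : Multiset ℝ), dist i (0.5 : ℝ) ≤ (0.5 : ℝ) := by
    intro i hi
    simp only [Multiset.insert_eq_cons, Multiset.mem_cons, Multiset.mem_singleton] at hi
    rcases hi with h' | h' | h' | h' <;> subst h' <;> norm_num [Real.dist_eq, abs_le]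
  have hp0 : ¬ (∀ i ∈ ({0, 0, 1, 1} : Multiset ℝ), dist i (0 : ℝ) ≤ (0.5 : ℝ)) := by
    intro hall
    have := hall 1 (by simp)
    norm_num [Real.dist_eq] at this
  have hp1 : ¬ (∀ i ∈ ({0, 0, 1, 1} : Multiset ℝ), dist i (1 : ℝ) ≤ (0.5 : ℝ)) := by
    intro hall
    have := hall 0 (by simp)
    norm_num [Real.dist_eq] at this
  have hfinal := h ({0, 0, 1, 1} : Multiset ℝ) le_rfl 2 two_pos (by simp) 0.5 (by norm_num)
    2 two_pos le_rfl
    (by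
      rw [show ({0, 0.5, 0.5, 1} : Multiset ℝ) =
          (0 : ℝ) ::ₘ (0.5 : ℝ) ::ₘ (0.5 : ℝ) ::ₘ (1 : ℝ) ::ₘ 0 from rfl,
        Multiset.filter_cons_of_neg _ hp0, Multiset.filter_cons_of_pos _ hp5,
        Multiset.filter_cons_of_pos _ hp5, Multiset.filter_cons_of_neg _ hp1,
        Multiset.filter_zero]
      simp)
  rw [Multiset.filter_cons_of_neg _ hp0, Multiset.filter_cons_of_neg _ hp1,
    Multiset.filter_zero] at hfinal
  simp at hfinal
end

section
/- The naive ball-based adaptations of PRF to the discrete setting do not imply Unanimous Proportionality: consider the instance on the real line (with the usual metric) with n ≥ 1 agents all located at 0, k = 1, and candidate set M = {−2, −1, 1, 2}. The outcome W = {2} satisfies both the weak union variant and the weak intersection variant of discrete PRF, yet W violates the discrete unanimous-proportionality requirement, since ℓ = 1 and k·n ≥ 1·n and there exists a candidate within distance 1 of the common agent location 0, but no selected center lies within distance 1 of 0. -/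
open scoped Classical

/-- The weak "union" variant of discrete PRF: for every submultiset `S` of `N`
and positive `ℓ` with `k·|S| ≥ ℓ·|N|`, letting `y` be the diameter of `S`, the
number of selected centers within distance `y` of some agent of `S` is at least
`min{ℓ, |(∪_{j ∈ S} B_y(j)) ∩ M|}`. -/
def WeakUnionPRF {X : Type*} [MetricSpace X] (N : Multiset X) (M : Finset X) (k : ℕ)
    (W : Finset X) : Prop :=
  ∀ S : Multiset X, S ≤ N → ∀ ℓ : ℕ, 0 < ℓ → ℓ * Multiset.card N ≤ k * Multiset.card S →
    ∀ y : ℝ, IsGreatest {r : ℝ | ∃ i ∈ S, ∃ i' ∈ S, dist i i' = r} y →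
      min ℓ ((M.filter (fun c => ∃ j ∈ S, dist j c ≤ y)).card) ≤
        (W.filter (fun c => ∃ i ∈ S, dist i c ≤ y)).card

/-- The weak "intersection" variant of discrete PRF: as above, but with the bound
`min{ℓ, |(∩_{i ∈ S} B_y(i)) ∩ M|}`. -/
def WeakInterPRF {X : Type*} [MetricSpace X] (N : Multiset X) (M : Finset X) (k : ℕ)
    (W : Finset X) : Prop :=
  ∀ S : Multiset X, S ≤ N → ∀ ℓ : ℕ, 0 < ℓ → ℓ * Multiset.card N ≤ k * Multiset.card S →
    ∀ y : ℝ, IsGreatest {r : ℝ | ∃ i ∈ S, ∃ i' ∈ S, dist i i' = r} y →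
      min ℓ ((M.filter (fun c => ∀ i ∈ S, dist i c ≤ y)).card) ≤
        (W.filter (fun c => ∃ i ∈ S, dist i c ≤ y)).card

/-- The discrete unanimous-proportionality requirement. -/
def DiscreteUP {X : Type*} [MetricSpace X] (N : Multiset X) (M : Finset X) (k : ℕ)
    (W : Finset X) : Prop :=
  ∀ x : X, ∀ ℓ : ℕ, 0 < ℓ → ℓ * Multiset.card N ≤ k * N.count x →
    ∀ y : ℝ, 0 ≤ y → ℓ ≤ (M.filter (fun c => dist x c ≤ y)).card →
      ℓ ≤ (W.filter (fun c => dist x c ≤ y)).card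

/-- The naive ball-based adaptations of PRF do not imply unanimous proportionality:
with `n ≥ 1` agents at `0`, `k = 1`, candidates `M = {-2,-1,1,2}` and outcome
`W = {2}`, both weak variants hold, yet discrete UP fails: some candidate is within
distance 1 of `0` but no selected center is. -/
theorem weak_variants_do_not_imply_up (n : ℕ) (hn : 1 ≤ n) :
    WeakUnionPRF (Multiset.replicate n (0 : ℝ)) ({-2, -1, 1, 2} : Finset ℝ) 1
      ({2} : Finset ℝ) ∧
    WeakInterPRF (Multiset.replicate n (0 : ℝ)) ({-2, -1, 1, 2} : Finset ℝ) 1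
      ({2} : Finset ℝ) ∧
    1 ≤ (({-2, -1, 1, 2} : Finset ℝ).filter (fun c => dist (0 : ℝ) c ≤ 1)).card ∧
    (({2} : Finset ℝ).filter (fun c => dist (0 : ℝ) c ≤ 1)).card = 0 ∧
    ¬ DiscreteUP (Multiset.replicate n (0 : ℝ)) ({-2, -1, 1, 2} : Finset ℝ) 1
      ({2} : Finset ℝ) := by
  have hM0 : (0:ℝ) ∉ ({-2, -1, 1, 2} : Finset ℝ) := by norm_num
  have h3 : 1 ≤ (({-2, -1, 1, 2} : Finset ℝ).filter (fun c => dist (0 : ℝ) c ≤ 1)).card := by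
    refine Finset.card_pos.2 ⟨1, Finset.mem_filter.2 ⟨by norm_num, by
      norm_num [Real.dist_eq]⟩⟩
  have h4 : (({2} : Finset ℝ).filter (fun c => dist (0 : ℝ) c ≤ 1)).card = 0 := by
    rw [Finset.card_eq_zero, Finset.filter_eq_empty_iff]
    intro c hc
    simp only [Finset.mem_singleton] at hc
    subst hc
    norm_num [Real.dist_eq]
  refine ⟨?_, ?_, h3, h4, ?_⟩
  · intro S hS ℓ hℓ hcard y hy
    obtain ⟨⟨i, hi, i', hi', hd⟩, _⟩ := hy
    have hi0 : i = 0 := Multiset.eq_of_mem_replicate (Multiset.mem_of_le hS hi)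
    have hi'0 : i' = 0 := Multiset.eq_of_mem_replicate (Multiset.mem_of_le hS hi')
    have hy0 : y = 0 := by rw [← hd, hi0, hi'0, dist_self]
    subst hy0
    have : (({-2, -1, 1, 2} : Finset ℝ).filter (fun c => ∃ j ∈ S, dist j c ≤ 0)).card = 0 := by
      rw [Finset.card_eq_zero, Finset.filter_eq_empty_iff]
      rintro c hc ⟨j, hj, hjc⟩
      have : j = 0 := Multiset.eq_of_mem_replicate (Multiset.mem_of_le hS hj)
      subst this
      have : c = 0 := by
        have := dist_nonneg (x := (0:ℝ)) (y := c)
        have h0 : dist (0:ℝ) c = 0 := le_antisymm hjc this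
        simpa [eq_comm] using dist_eq_zero.mp h0
      exact hM0 (this ▸ hc)
    rw [this]
    simp
  · intro S hS ℓ hℓ hcard y hy
    obtain ⟨⟨i, hi, i', hi', hd⟩, _⟩ := hy
    have hi0 : i = 0 := Multiset.eq_of_mem_replicate (Multiset.mem_of_le hS hi)
    have hi'0 : i' = 0 := Multiset.eq_of_mem_replicate (Multiset.mem_of_le hS hi')
    have hy0 : y = 0 := by rw [← hd, hi0, hi'0, dist_self]
    subst hy0
    have : (({-2, -1, 1, 2} : Finset ℝ).filter (fun c => ∀ j ∈ S, dist j c ≤ 0)).card = 0 := by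
      rw [Finset.card_eq_zero, Finset.filter_eq_empty_iff]
      intro c hc hall
      have hjc := hall i hi
      rw [hi0] at hjc
      have : c = 0 := by
        have h0 : dist (0:ℝ) c = 0 := le_antisymm hjc dist_nonneg
        simpa [eq_comm] using dist_eq_zero.mp h0
      exact hM0 (this ▸ hc)
    rw [this]
    simp
  · intro h
    have := h 0 1 one_pos (by simp [Multiset.count_replicate]) 1 zero_le_one h3
    omega
end

section
/- For the instance on the real line (with the usual metric) with agent multiset N = {0, 0, 1, 1} (so n = 4), k = 2, and candidate multiset M = {0, 0.5, 0.5, 1}, every submultiset W of M with |W| = 2 that satisfies PRF-II must contain both the candidate 0 and the candidate 1, i.e., W = {0, 1}. -/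
open scoped Classical

lemma mem_of_prf (W : Multiset ℝ)
    (hPRF : PRFII ({0, 0, 1, 1} : Multiset ℝ) ({0, 0.5, 0.5, 1} : Multiset ℝ) 2 W)
    (a : ℝ) (ha : a = 0 ∨ a = 1) : a ∈ W := by
  have hS : ({a, a} : Multiset ℝ) ≤ ({0, 0, 1, 1} : Multiset ℝ) := by
    refine Multiset.le_iff_count.2 fun b => ?_
    rcases ha with rfl | rfl <;> by_cases hb0 : b = 0 <;> by_cases hb1 : b = 1 <;>
      simp_all [Multiset.count_cons, Multiset.count_singleton]
  have haM : a ∈ ({0, 0.5, 0.5, 1} : Multiset ℝ) := by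
    rcases ha with rfl | rfl <;> simp
  have hfilt : 1 ≤ Multiset.card
      (({0, 0.5, 0.5, 1} : Multiset ℝ).filter
        (fun c => ∀ i ∈ ({a, a} : Multiset ℝ), dist i c ≤ 0)) := by
    refine Multiset.card_pos_iff_exists_mem.2 ⟨a, Multiset.mem_filter.2 ⟨haM, ?_⟩⟩
    intro i hi
    have : i = a := by simpa using hi
    simp [this]
  obtain ⟨i, hi, hW⟩ := hPRF {a, a} hS 1 one_pos (by simp) 0 le_rfl 1 one_pos le_rfl hfilt
  have hia : i = a := by simpa using hi
  subst hia
  obtain ⟨c, hc⟩ := Multiset.card_pos_iff_exists_mem.1 hW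
  rw [Multiset.mem_filter] at hc
  have : c = i := by
    have := hc.2
    have h0 : dist i c = 0 := le_antisymm this dist_nonneg
    exact (dist_eq_zero.1 h0).symm
  subst this
  exact hc.1

/-- For agents `{0,0,1,1}`, `k = 2` and candidate multiset `{0, 0.5, 0.5, 1}`,
any size-2 submultiset of `M` satisfying PRF-II must be `{0, 1}`. -/
theorem prfII_forces_zero_one :
    ∀ W : Multiset ℝ, W ≤ ({0, 0.5, 0.5, 1} : Multiset ℝ) → Multiset.card W = 2 →
      PRFII ({0, 0, 1, 1} : Multiset ℝ) ({0, 0.5, 0.5, 1} : Multiset ℝ) 2 W →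
      W = ({0, 1} : Multiset ℝ) := by
  intro W _ hcard hPRF
  have h0 : (0 : ℝ) ∈ W := mem_of_prf W hPRF 0 (Or.inl rfl)
  have h1 : (1 : ℝ) ∈ W := mem_of_prf W hPRF 1 (Or.inr rfl)
  have hle : ({0, 1} : Multiset ℝ) ≤ W := by
    refine Multiset.le_iff_count.2 fun b => ?_
    by_cases hb0 : b = 0
    · subst hb0
      have : 1 ≤ Multiset.count (0:ℝ) W := Multiset.one_le_count_iff_mem.2 h0
      simpa using this
    · by_cases hb1 : b = 1
      · subst hb1
        have : 1 ≤ Multiset.count (1:ℝ) W := Multiset.one_le_count_iff_mem.2 h1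
        simpa using this
      · simp [Multiset.count_cons, Multiset.count_singleton, hb0, hb1]
  exact (Multiset.eq_of_le_of_card_le hle (by simp [hcard])).symm
end
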